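/- The 4-dimensional subspace of ℂ³⊗ℂ⁴ spanned by u₁, u₂, u₃, u₄ (the linear combinations of the missing states from Eq. (2) orthogonal to the stopper) contains no nonzero product vector a⊗b. -/

import Mathlib

noncomputable section

def e {n : ℕ} (i : Fin n) : EuclideanSpace ℂ (Fin n) := EuclideanSpace.single i 1

def tp {m n : ℕ} (a : EuclideanSpace ℂ (Fin m)) (b : EuclideanSpace ℂ (Fin n)) :
    EuclideanSpace ℂ (Fin m × Fin n) := WithLp.toLp 2 (fun p : Fin m × Fin n => a p.1 * b p.2)

def p1 : EuclideanSpace ℂ (Fin 3 × Fin 4) := tp (e 0) (e 0 + e 1 + e 2)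
def p2 : EuclideanSpace ℂ (Fin 3 × Fin 4) := tp (e 0 + e 1) (e 3)
def p3 : EuclideanSpace ℂ (Fin 3 × Fin 4) := tp (e 2) (e 1 + e 2 + e 3)
def p4 : EuclideanSpace ℂ (Fin 3 × Fin 4) := tp (e 1 + e 2) (e 0)
def p5 : EuclideanSpace ℂ (Fin 3 × Fin 4) := tp (e 1) (e 1 + e 2)

def u : Fin 4 → EuclideanSpace ℂ (Fin 3 × Fin 4) :=
  ![p1 - p3, p2 - p4, (2 : ℂ) • (p1 + p3) - (3 : ℂ) • (p2 + p4),
    p1 + p2 + p3 + p4 - (5 : ℂ) • p5]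

/-- The key algebraic fact: the eight linear conditions satisfied by every member of the
span force all products `aᵢ * bⱼ` of a product vector to vanish. -/
lemma key_alg (a0 a1 a2 b0 b1 b2 b3 : ℂ)
    (h1 : a0*b0 = a0*b1) (h2 : a0*b1 = a0*b2) (h3 : a0*b3 = a1*b3)
    (h4 : a1*b0 = a2*b0) (h5 : a1*b1 = a1*b2) (h6 : a2*b1 = a2*b2) (h7 : a2*b2 = a2*b3)
    (h8 : 3*(a0*b0 + a2*b1) + 2*(a0*b3 + a1*b0) + 2*(a1*b1) = 0) :
    a0*b0 = 0 ∧ a0*b3 = 0 ∧ a1*b0 = 0 ∧ a1*b1 = 0 ∧ a2*b1 = 0 := by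
  set A := a0*b0 with hAdef
  set B := a0*b3 with hBdef
  set C := a1*b0 with hCdef
  set D := a1*b1 with hDdef
  set E := a2*b1 with hEdef
  have hAC_AD : A*C = A*D := by linear_combination (a1*b0)*h1
  have hAC_AE : A*C = A*E := by linear_combination (a0*b0)*h4 + (a2*b0)*h1
  have hBA_BC : B*A = B*C := by linear_combination (a0*b0)*h3
  have hBA_BD : B*A = B*D := by linear_combination (a0*b1)*h3 + (a0*b3)*h1
  have hCD_CE : C*D = C*E := by linear_combination (a1*b1)*h4
  have hEB_ED : E*B = E*D := by linear_combination (a2*b1)*h3 - (a1*b1)*h6 - (a1*b1)*h7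
  have hBC_AE : B*C = A*E := by linear_combination (a0*b3)*h4 - (a0*b0)*h6 - (a0*b0)*h7
  clear_value A B C D E
  clear hAdef hBdef hCdef hDdef hEdef h1 h2 h3 h4 h5 h6 h7
  by_cases hA : A = 0
  · by_cases hE : E = 0
    · have hBC0 : B*C = 0 := by rw [hBC_AE, hA, zero_mul]
      have hBD0 : B*D = 0 := by rw [← hBA_BD, hA, mul_zero]
      have hCD0 : C*D = 0 := by rw [hCD_CE, hE, mul_zero]
      have hsum : B + C + D = 0 := by linear_combination (1/2)*h8 - (3/2)*hA - (3/2)*hE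
      have hB0 : B = 0 := mul_self_eq_zero.mp (by linear_combination B*hsum - hBC0 - hBD0)
      have hC0 : C = 0 := mul_self_eq_zero.mp (by linear_combination C*hsum - hBC0 - hCD0)
      have hD0 : D = 0 := mul_self_eq_zero.mp (by linear_combination D*hsum - hBD0 - hCD0)
      exact ⟨hA, hB0, hC0, hD0, hE⟩
    · have hBD : B = D := mul_left_cancel₀ hE hEB_ED
      have hC : C = 0 := by
        by_contra hC
        have hDE : D = E := mul_left_cancel₀ hC hCD_CE
        have hB0 : B = 0 := by
          have hbc : B*C = 0 := by rw [hBC_AE, hA, zero_mul]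
          exact (mul_eq_zero.mp hbc).resolve_right hC
        exact hE (by linear_combination -hDE - hBD + hB0)
      have hBD0 : B*D = 0 := by rw [← hBA_BD, hA, mul_zero]
      have hB0 : B = 0 := mul_self_eq_zero.mp (by linear_combination B*hBD + hBD0)
      have hD0 : D = 0 := hBD.symm.trans hB0
      exact absurd
        (by linear_combination (1/3)*h8 - hA - (2/3)*hB0 - (2/3)*hC - (2/3)*hD0 : E = 0) hE
  · have hCD : C = D := mul_left_cancel₀ hA hAC_AD
    have hCE : C = E := mul_left_cancel₀ hA hAC_AE
    by_cases hB : B = 0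
    · have hAE0 : A*E = 0 := by rw [← hBC_AE, hB, zero_mul]
      have hE : E = 0 := (mul_eq_zero.mp hAE0).resolve_left hA
      have hC : C = 0 := hCE.trans hE
      have hD : D = 0 := hCD ▸ hC
      exact absurd
        (by linear_combination (1/3)*h8 - hE - (2/3)*hB - (2/3)*hC - (2/3)*hD : A = 0) hA
    · have hAC : A = C := mul_left_cancel₀ hB hBA_BC
      have key2 : B*A = A*A := by linear_combination hBC_AE + (B - A)*hAC - A*hCE
      have hBA : B = A := mul_right_cancel₀ hA key2
      exact absurd
        (by linear_combination (1/12)*h8 + (7/12)*hAC + (1/6)*hCD + (1/4)*hCE - (1/6)*hBA :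
          A = 0) hA

/-- Eight linear conditions satisfied by every vector in the span of the `u i`. -/
def P (v : EuclideanSpace ℂ (Fin 3 × Fin 4)) : Prop :=
  v (0,0) = v (0,1) ∧ v (0,1) = v (0,2) ∧ v (0,3) = v (1,3) ∧ v (1,0) = v (2,0) ∧
  v (1,1) = v (1,2) ∧ v (2,1) = v (2,2) ∧ v (2,2) = v (2,3) ∧
  3*(v (0,0) + v (2,1)) + 2*(v (0,3) + v (1,0)) + 2*(v (1,1)) = 0

lemma P_u : ∀ i, P (u i) := by
  intro i
  unfold P
  fin_cases i <;>
    norm_num (config := { decide := true })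
      [u, p1, p2, p3, p4, p5, tp, e, EuclideanSpace.single_apply]

lemma spanP {v : EuclideanSpace ℂ (Fin 3 × Fin 4)}
    (h : v ∈ Submodule.span ℂ (Set.range u)) : P v := by
  refine Submodule.span_induction (p := fun x _ => P x) ?_ ?_ ?_ ?_ h
  · rintro x ⟨i, rfl⟩
    exact P_u i
  · refine ⟨rfl, rfl, rfl, rfl, rfl, rfl, rfl, by norm_num⟩
  · rintro x y - - ⟨hx1, hx2, hx3, hx4, hx5, hx6, hx7, hx8⟩ ⟨hy1, hy2, hy3, hy4, hy5, hy6, hy7, hy8⟩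
    refine ⟨?_, ?_, ?_, ?_, ?_, ?_, ?_, ?_⟩ <;> simp only [PiLp.add_apply]
    · rw [hx1, hy1]
    · rw [hx2, hy2]
    · rw [hx3, hy3]
    · rw [hx4, hy4]
    · rw [hx5, hy5]
    · rw [hx6, hy6]
    · rw [hx7, hy7]
    · linear_combination hx8 + hy8
  · rintro c x - ⟨hx1, hx2, hx3, hx4, hx5, hx6, hx7, hx8⟩
    refine ⟨?_, ?_, ?_, ?_, ?_, ?_, ?_, ?_⟩ <;> simp only [PiLp.smul_apply, smul_eq_mul]
    · rw [hx1]
    · rw [hx2]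
    · rw [hx3]
    · rw [hx4]
    · rw [hx5]
    · rw [hx6]
    · rw [hx7]
    · linear_combination c * hx8

/-- Evaluation at a coordinate, as a linear functional. -/
def ev (p : Fin 3 × Fin 4) : EuclideanSpace ℂ (Fin 3 × Fin 4) →ₗ[ℂ] ℂ where
  toFun v := v p
  map_add' _ _ := rfl
  map_smul' _ _ := rfl

lemma uli : LinearIndependent ℂ u := by
  rw [Fintype.linearIndependent_iff]
  intro g hg
  have h : ∀ p : Fin 3 × Fin 4, ∑ i : Fin 4, g i * u i p = 0 := by
    intro p
    have h0 := congrArg (ev p) hg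
    simp only [map_sum, map_smul, smul_eq_mul, map_zero] at h0
    exact h0
  have e00 := h (0,0); have e21 := h (2,1); have e03 := h (0,3)
  have e10 := h (1,0); have e11 := h (1,1)
  simp [Fin.sum_univ_four, u, p1, p2, p3, p4, p5, tp, e,
    EuclideanSpace.single_apply] at e00 e21 e03 e10 e11
  intro i
  fin_cases i
  · show g 0 = 0
    linear_combination (1/2)*e00 - (1/2)*e21
  · show g 1 = 0
    linear_combination (1/2)*e03 - (1/2)*e10
  · show g 2 = 0
    linear_combination (1/4)*e00 + (1/4)*e21 - (1/2)*e11
  · show g 3 = 0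
    exact e11

theorem u_span_CES :
    Module.finrank ℂ (Submodule.span ℂ (Set.range u) :
        Submodule ℂ (EuclideanSpace ℂ (Fin 3 × Fin 4))) = 4 ∧
    ∀ (a : EuclideanSpace ℂ (Fin 3)) (b : EuclideanSpace ℂ (Fin 4)),
      tp a b ∈ Submodule.span ℂ (Set.range u) → tp a b = 0 := by
  constructor
  · simpa using finrank_span_eq_card uli
  · intro a b hmem
    obtain ⟨h1, h2, h3, h4, h5, h6, h7, h8⟩ := spanP hmem
    simp only [tp] at h1 h2 h3 h4 h5 h6 h7 h8
    obtain ⟨hA, hB, hC, hD, hE⟩ :=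
      key_alg (a 0) (a 1) (a 2) (b 0) (b 1) (b 2) (b 3) h1 h2 h3 h4 h5 h6 h7 h8
    ext p
    obtain ⟨i, j⟩ := p
    show a i * b j = 0
    fin_cases i <;> fin_cases j
    · exact hA
    · show a 0 * b 1 = 0; linear_combination hA - h1
    · show a 0 * b 2 = 0; linear_combination hA - h1 - h2
    · exact hB
    · exact hC
    · exact hD
    · show a 1 * b 2 = 0; linear_combination hD - h5
    · show a 1 * b 3 = 0; linear_combination hB - h3
    · show a 2 * b 0 = 0; linear_combination hC - h4
    · exact hE
    · show a 2 * b 2 = 0; linear_combination hE - h6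
    · show a 2 * b 3 = 0; linear_combination hE - h6 - h7
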